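/- Let δ ∈ (0,1/2), η > 0, and set θ = 3(1−δ)η/δ. Let μ_j = δ μ_{j,F} + (1−δ) μ_{j,B} ∈ P_δ for j = 1,2. Then for every z ∈ S_B(θ)^c ∩ S_F(η), one has T(μ1 − μ2)(z) ≥ ((3(1−δ)² − δ²)/δ) η; moreover, since δ < 1/2, (3(1−δ)² − δ²)/δ > 2(1−δ), so T(μ1 − μ2)(z) > 2(1−δ)η. -/
import Mathlib


open MeasureTheory Set

/-- CDF of `|f|` with respect to `ν`: `Λ(f)(t) = ν{z : |f(z)| < t}`. -/
noncomputable def Lambda {X : Type*} [MeasurableSpace X] (ν : Measure X) (f : X → ℝ) (t : ℝ) : ℝ :=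
  (ν {z | |f z| < t}).toReal

/-- Inverse CDF: `f#(u) = sup {t : Λ(f)(t) ≤ u}`. -/
noncomputable def invCDF {X : Type*} [MeasurableSpace X] (ν : Measure X) (f : X → ℝ) (u : ℝ) : ℝ :=
  sSup {t : ℝ | Lambda ν f t ≤ u}

/-- Witness function of the signed measure `μ₁ - μ₂`:
`U(μ₁-μ₂)(z) = ∫ K(z,x) dμ₁(x) - ∫ K(z,x) dμ₂(x)`. -/
noncomputable def witness {X : Type*} [MeasurableSpace X] (K : X → X → ℝ)
    (μ₁ μ₂ : Measure X) (z : X) : ℝ :=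
  (∫ x, K z x ∂μ₁) - ∫ x, K z x ∂μ₂

/-- `kdiff(μ₁,μ₂;α) = (T(μ₁-μ₂))#(α)` where `T(μ₁-μ₂) = |U(μ₁-μ₂)|`. -/
noncomputable def kdiff {X : Type*} [MeasurableSpace X] (ν : Measure X) (K : X → X → ℝ)
    (μ₁ μ₂ : Measure X) (α : ℝ) : ℝ :=
  invCDF ν (fun z => |witness K μ₁ μ₂ z|) α

/-- Mixture `δ μF + (1-δ) μB`. -/
noncomputable def mix {X : Type*} [MeasurableSpace X] (δ : ℝ) (μF μB : Measure X) : Measure X :=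
  ENNReal.ofReal δ • μF + ENNReal.ofReal (1 - δ) • μB

/-- `S(η) = {z : T(μ₁-μ₂)(z) < η}`. -/
def Sset {X : Type*} [MeasurableSpace X] (K : X → X → ℝ) (μ₁ μ₂ : Measure X) (η : ℝ) : Set X :=
  {z | |witness K μ₁ μ₂ z| < η}

/-- `G(θ,η) = (S_F(θ)ᶜ ∩ S_B(η)) ∪ (S_B(θ)ᶜ ∩ S_F(η))`. -/
def Gset {X : Type*} [MeasurableSpace X] (K : X → X → ℝ)
    (μ1F μ2F μ1B μ2B : Measure X) (θ η : ℝ) : Set X :=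
  ((Sset K μ1F μ2F θ)ᶜ ∩ Sset K μ1B μ2B η) ∪ ((Sset K μ1B μ2B θ)ᶜ ∩ Sset K μ1F μ2F η)

lemma integrable_K_aux {X : Type*} [MeasurableSpace X] (K : X → X → ℝ)
    (hKmeas : Measurable (Function.uncurry K)) {C : ℝ} (hKbd : ∀ x y, |K x y| ≤ C)
    (z : X) (μ : Measure X) [IsFiniteMeasure μ] : Integrable (fun x => K z x) μ := by
  have hm : Measurable fun x => K z x := hKmeas.comp measurable_prodMk_left
  exact (integrable_const C).mono' hm.aestronglyMeasurable
    (Filter.Eventually.of_forall fun x => by simpa using hKbd z x)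

lemma integral_mix {X : Type*} [MeasurableSpace X] (f : X → ℝ) {δ : ℝ}
    (hδ0 : 0 ≤ δ) (hδ1 : δ ≤ 1) (μF μB : Measure X) [IsFiniteMeasure μF] [IsFiniteMeasure μB]
    (hF : Integrable f μF) (hB : Integrable f μB) :
    ∫ x, f x ∂(mix δ μF μB) = δ * ∫ x, f x ∂μF + (1 - δ) * ∫ x, f x ∂μB := by
  rw [mix, integral_add_measure (hF.smul_measure ENNReal.ofReal_ne_top)
    (hB.smul_measure ENNReal.ofReal_ne_top), integral_smul_measure, integral_smul_measure,
    ENNReal.toReal_ofReal hδ0, ENNReal.toReal_ofReal (by linarith)]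
  simp [smul_eq_mul]

/-- with `θ = 3(1-δ)η/δ`, for every `z ∈ S_B(θ)ᶜ ∩ S_F(η)` one has
`T(μ₁-μ₂)(z) ≥ ((3(1-δ)² - δ²)/δ) η`; moreover `(3(1-δ)² - δ²)/δ > 2(1-δ)`, so
`T(μ₁-μ₂)(z) > 2(1-δ)η`. -/
theorem stmt8 {X : Type*} [MetricSpace X] [MeasurableSpace X] [BorelSpace X]
    (K : X → X → ℝ) (hKmeas : Measurable (Function.uncurry K))
    (hKbd : ∃ C : ℝ, ∀ x y, |K x y| ≤ C)
    (δ : ℝ) (hδ : δ ∈ Ioo (0 : ℝ) (1 / 2))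
    (η : ℝ) (hη : 0 < η)
    (μ1F μ1B μ2F μ2B : Measure X)
    [IsProbabilityMeasure μ1F] [IsProbabilityMeasure μ1B]
    [IsProbabilityMeasure μ2F] [IsProbabilityMeasure μ2B] :
    (∀ z ∈ (Sset K μ1B μ2B (3 * (1 - δ) * η / δ))ᶜ ∩ Sset K μ1F μ2F η,
        (3 * (1 - δ) ^ 2 - δ ^ 2) / δ * η ≤ |witness K (mix δ μ1F μ1B) (mix δ μ2F μ2B) z|) ∧
      2 * (1 - δ) < (3 * (1 - δ) ^ 2 - δ ^ 2) / δ ∧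
      ∀ z ∈ (Sset K μ1B μ2B (3 * (1 - δ) * η / δ))ᶜ ∩ Sset K μ1F μ2F η,
        2 * (1 - δ) * η < |witness K (mix δ μ1F μ1B) (mix δ μ2F μ2B) z| := by
  obtain ⟨hδ0, hδh⟩ := hδ
  obtain ⟨C, hKbd⟩ := hKbd
  have hδ1 : δ ≤ 1 := by linarith
  have hw : ∀ z, witness K (mix δ μ1F μ1B) (mix δ μ2F μ2B) z
      = δ * witness K μ1F μ2F z + (1 - δ) * witness K μ1B μ2B z := by
    intro z
    simp only [witness]
    rw [integral_mix _ hδ0.le hδ1 _ _ (integrable_K_aux K hKmeas hKbd z μ1F)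
      (integrable_K_aux K hKmeas hKbd z μ1B),
      integral_mix _ hδ0.le hδ1 _ _ (integrable_K_aux K hKmeas hKbd z μ2F)
      (integrable_K_aux K hKmeas hKbd z μ2B)]
    ring
  have hkey : ∀ z ∈ (Sset K μ1B μ2B (3 * (1 - δ) * η / δ))ᶜ ∩ Sset K μ1F μ2F η,
      (3 * (1 - δ) ^ 2 - δ ^ 2) / δ * η ≤ |witness K (mix δ μ1F μ1B) (mix δ μ2F μ2B) z| := by
    rintro z ⟨hB, hF⟩
    simp only [Sset, mem_compl_iff, mem_setOf_eq, not_lt] at hB hF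
    rw [hw z]
    have h1 : (1 - δ) * |witness K μ1B μ2B z| - δ * |witness K μ1F μ2F z|
        ≤ |δ * witness K μ1F μ2F z + (1 - δ) * witness K μ1B μ2B z| := by
      have := abs_add_le (δ * witness K μ1F μ2F z + (1 - δ) * witness K μ1B μ2B z)
        (-(δ * witness K μ1F μ2F z))
      simp only [abs_neg, abs_mul, abs_of_nonneg hδ0.le,
        abs_of_nonneg (by linarith : (0:ℝ) ≤ 1 - δ)] at this ⊢
      have h2 : |δ * witness K μ1F μ2F z + (1 - δ) * witness K μ1B μ2B z
          + -(δ * witness K μ1F μ2F z)| = (1 - δ) * |witness K μ1B μ2B z| := by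
        rw [show δ * witness K μ1F μ2F z + (1 - δ) * witness K μ1B μ2B z
          + -(δ * witness K μ1F μ2F z) = (1 - δ) * witness K μ1B μ2B z by ring,
          abs_mul, abs_of_nonneg (by linarith : (0:ℝ) ≤ 1 - δ)]
      linarith [h2 ▸ this]
    have h3 : (1 - δ) * (3 * (1 - δ) * η / δ) ≤ (1 - δ) * |witness K μ1B μ2B z| :=
      mul_le_mul_of_nonneg_left hB (by linarith)
    have h4 : δ * |witness K μ1F μ2F z| ≤ δ * η := mul_le_mul_of_nonneg_left hF.le hδ0.le
    have heq : (3 * (1 - δ) ^ 2 - δ ^ 2) / δ * η = (1 - δ) * (3 * (1 - δ) * η / δ) - δ * η := by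
      field_simp
    linarith
  have h2 : 2 * (1 - δ) < (3 * (1 - δ) ^ 2 - δ ^ 2) / δ := by
    rw [lt_div_iff₀ hδ0]; nlinarith
  refine ⟨hkey, h2, fun z hz => ?_⟩
  have := hkey z hz
  have : 2 * (1 - δ) * η < (3 * (1 - δ) ^ 2 - δ ^ 2) / δ * η := by
    exact mul_lt_mul_of_pos_right h2 hη
  linarith [hkey z hz]
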